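/- Let μ be a non-degenerate probability measure on Γ with finite second moment. For v ∈ ℝ^m, let u be the harmonic part in a harmonic decomposition v̂ = u + df, and set Q(v) := ∑_{x∈Δ}∑_{s∈Γ} c(x,s)·u(x,s)² − χ(u)². Then Q(v) ≥ 0 for every v ∈ ℝ^m, and Q(v) = 0 implies v = 0; that is, the associated covariance quadratic form is positive definite. -/

import Mathlib

open scoped BigOperators Classical
open Filter Matrix MeasureTheory

namespace NSVA

noncomputable section

/-- Convolution of two real-valued functions on a group. -/
def conv {G : Type*} [Group G] (μ ν : G → ℝ) : G → ℝ :=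
  fun g => ∑' h : G, μ h * ν (h⁻¹ * g)

/-- Convolution powers: `convPow μ 0 = δ_1`, `convPow μ (n+1) = (convPow μ n) * μ`. -/
def convPow {G : Type*} [Group G] (μ : G → ℝ) : ℕ → G → ℝ
  | 0 => fun g => if g = 1 then 1 else 0
  | n + 1 => conv (convPow μ n) μ

/-- A probability measure on a countable set, viewed as a function. -/
def IsProb {G : Type*} (μ : G → ℝ) : Prop := (∀ g, 0 ≤ μ g) ∧ HasSum μ 1

/-- The support of `μ` generates the group as a semigroup. -/
def Nondeg {G : Type*} [Group G] (μ : G → ℝ) : Prop :=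
  ∀ g : G, g ∈ Subsemigroup.closure {x : G | 0 < μ x}

/-- `μ` is aperiodic: `μ_n(1) > 0` for all large enough `n`. -/
def Aperiodic {G : Type*} [Group G] (μ : G → ℝ) : Prop :=
  ∃ N : ℕ, ∀ n : ℕ, N ≤ n → 0 < convPow μ n 1

/-- Total variation distance between two (probability) functions. -/
def tv {Z : Type*} (p q : Z → ℝ) : ℝ := (1 / 2) * ∑' z : Z, |p z - q z|

/-- Word length with respect to a finite set `S₀`. -/
def wordLength {G : Type*} [Group G] (S₀ : Finset G) (g : G) : ℕ :=
  sInf {n : ℕ | ∃ l : List G, (∀ s ∈ l, s ∈ S₀) ∧ l.length = n ∧ l.prod = g}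

/-- Finite second moment with respect to a word metric given by a finite symmetric
generating set. -/
def FinSecondMoment {G : Type*} [Group G] (μ : G → ℝ) : Prop :=
  ∃ S₀ : Finset G, (∀ s ∈ S₀, s⁻¹ ∈ S₀) ∧ Subgroup.closure (S₀ : Set G) = ⊤ ∧
    Summable (fun g : G => (wordLength S₀ g : ℝ) ^ 2 * μ g)

/-- A group is virtually abelian if it has an abelian subgroup of finite index. -/
def VirtAbelian (G : Type*) [Group G] : Prop :=
  ∃ A : Subgroup G, A.index ≠ 0 ∧ ∀ a b : A, a * b = b * a

/-- The noised measure `π^ρ` on `G × G`. -/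
def noised {G : Type*} (μ : G → ℝ) (ρ : ℝ) : G × G → ℝ :=
  fun p => ρ * μ p.1 * μ p.2 + (1 - ρ) * μ p.1 * (if p.1 = p.2 then 1 else 0)

/-- First marginal of a measure on a product. -/
def marg1 {G₁ G₂ : Type*} (ν : G₁ × G₂ → ℝ) : G₁ → ℝ := fun γ₁ => ∑' γ₂ : G₂, ν (γ₁, γ₂)

/-- Second marginal of a measure on a product. -/
def marg2 {G₁ G₂ : Type*} (ν : G₁ × G₂ → ℝ) : G₂ → ℝ := fun γ₂ => ∑' γ₁ : G₁, ν (γ₁, γ₂)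

/-- A system of representatives of the right cosets `Λ\Γ` containing the identity,
together with the representative map `rep`, constant on right cosets. -/
structure RepSystem {Γ : Type*} [Group Γ] (Λ : Subgroup Γ) where
  Δ : Finset Γ
  one_mem : (1 : Γ) ∈ Δ
  rep : Γ → Γ
  rep_mem : ∀ γ : Γ, rep γ ∈ Δ
  rep_spec : ∀ γ : Γ, γ * (rep γ)⁻¹ ∈ Λ
  rep_idem : ∀ x ∈ Δ, rep x = x
  rep_coset : ∀ γ : Γ, ∀ v ∈ Λ, rep (v * γ) = rep γ

variable {Γ : Type*} [Group Γ] {Λ : Subgroup Γ} {m : ℕ}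

/-- The cocycle `α(x,s) = ψ(x·s·(x^s)⁻¹) ∈ ℤ^m`. -/
def cocycle (ψ : Λ ≃* Multiplicative (Fin m → ℤ)) (R : RepSystem Λ) (x s : Γ) : Fin m → ℤ :=
  Multiplicative.toAdd (ψ ⟨x * s * (R.rep (x * s))⁻¹, R.rep_spec (x * s)⟩)

/-- The transfer homomorphism `θ(γ) = ∑_{x∈Δ} α(x,γ)`. -/
def transfer (ψ : Λ ≃* Multiplicative (Fin m → ℤ)) (R : RepSystem Λ) (γ : Γ) : Fin m → ℤ :=
  ∑ x ∈ R.Δ, cocycle ψ R x γ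

/-- `Φ(γ) = ψ(v)` where `γ = v·x`, `v ∈ Λ`, `x ∈ Δ`. -/
def Phi (ψ : Λ ≃* Multiplicative (Fin m → ℤ)) (R : RepSystem Λ) (γ : Γ) : Fin m → ℤ :=
  Multiplicative.toAdd (ψ ⟨γ * (R.rep γ)⁻¹, R.rep_spec γ⟩)

/-- A 1-form on the quotient diagram. -/
def IsOneForm (R : RepSystem Λ) (ω : Γ → Γ → ℝ) : Prop :=
  ∀ x ∈ R.Δ, ∀ s : Γ, ω (R.rep (x * s)) s⁻¹ = -ω x s

/-- `χ(ω) = ∑_{x∈Δ} ∑_s c(x,s)·ω(x,s)` where `c(x,s) = μ(s)/#F`. -/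
def chi (R : RepSystem Λ) (μ : Γ → ℝ) (ω : Γ → Γ → ℝ) : ℝ :=
  ∑ x ∈ R.Δ, ∑' s : Γ, μ s / (Λ.index : ℝ) * ω x s

/-- Square-integrability of a 1-form. -/
def SqInt (R : RepSystem Λ) (μ : Γ → ℝ) (ω : Γ → Γ → ℝ) : Prop :=
  ∀ x ∈ R.Δ, Summable (fun s : Γ => μ s / (Λ.index : ℝ) * ω x s ^ 2)

/-- Harmonicity of a (square-integrable) 1-form. -/
def Harmonic (R : RepSystem Λ) (μ : Γ → ℝ) (ω : Γ → Γ → ℝ) : Prop :=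
  SqInt R μ ω ∧ ∀ x ∈ R.Δ, (∑' s : Γ, μ s * ω x s) = chi R μ ω

/-- The differential `df(x,s) = f(x^s) − f(x)`. -/
def dd (R : RepSystem Λ) (f : Γ → ℝ) : Γ → Γ → ℝ := fun x s => f (R.rep (x * s)) - f x

/-- `(u, f)` is a harmonic decomposition of the 1-form `ω`: `ω = u + df` with `u`
a harmonic 1-form. -/
def IsHarmDecomp (R : RepSystem Λ) (μ : Γ → ℝ) (ω u : Γ → Γ → ℝ) (f : Γ → ℝ) : Prop :=
  IsOneForm R u ∧ Harmonic R μ u ∧ ∀ x ∈ R.Δ, ∀ s : Γ, ω x s = u x s + dd R f x s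

/-- The 1-form `v̂(x,s) = ⟨v, α(x,s)⟩` (standard inner product). -/
def vhat (ψ : Λ ≃* Multiplicative (Fin m → ℤ)) (R : RepSystem Λ) (v : Fin m → ℝ) :
    Γ → Γ → ℝ :=
  fun x s => ∑ i, v i * (cocycle ψ R x s i : ℝ)

/-- The 1-form `v̂(x,s) = B(v, α(x,s))` for a bilinear form `B`. -/
def vhatB (ψ : Λ ≃* Multiplicative (Fin m → ℤ)) (R : RepSystem Λ)
    (B : (Fin m → ℝ) →ₗ[ℝ] (Fin m → ℝ) →ₗ[ℝ] ℝ) (v : Fin m → ℝ) : Γ → Γ → ℝ :=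
  fun x s => B v (fun i => (cocycle ψ R x s i : ℝ))

/-- The drift `ζ = (1/#F)·∑_{x∈Δ}∑_s μ(s)·α(x,s) ∈ ℝ^m`. -/
def drift (ψ : Λ ≃* Multiplicative (Fin m → ℤ)) (R : RepSystem Λ) (μ : Γ → ℝ) : Fin m → ℝ :=
  fun i => (Λ.index : ℝ)⁻¹ * ∑ x ∈ R.Δ, ∑' s : Γ, μ s * (cocycle ψ R x s i : ℝ)

/-- The covariance pairing `∑_{x,s} c(x,s)·u(x,s)·u'(x,s) − χ(u)·χ(u')`. -/
def cov (R : RepSystem Λ) (μ : Γ → ℝ) (u u' : Γ → Γ → ℝ) : ℝ :=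
  (∑ x ∈ R.Δ, ∑' s : Γ, μ s / (Λ.index : ℝ) * (u x s * u' x s)) - chi R μ u * chi R μ u'

/-- The transfer operator `ℒ_v` acting on functions `Δ → ℂ`. -/
def transferOp (ψ : Λ ≃* Multiplicative (Fin m → ℤ)) (R : RepSystem Λ) (μ : Γ → ℝ)
    (v : Fin m → ℝ) (f : Γ → ℂ) : Γ → ℂ :=
  fun x => ∑' s : Γ, (μ s : ℂ) *
    Complex.exp (2 * Real.pi * Complex.I * ((∑ i, v i * (cocycle ψ R x s i : ℝ)) : ℝ)) *
    f (R.rep (x * s))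

/-- The Gaussian density `ξ_A(w)` associated with a (positive-definite) matrix `A`. -/
def gauss {d : ℕ} (A : Matrix (Fin d) (Fin d) ℝ) (w : Fin d → ℝ) : ℝ :=
  (2 * Real.pi) ^ (-(d : ℝ) / 2) * A.det ^ (-(1 : ℝ) / 2) *
    Real.exp (-(w ⬝ᵥ A⁻¹.mulVec w) / 2)

/-- The product representative system for `Λ₁ × Λ₂ ≤ Γ₁ × Γ₂`. -/
def prodRep {Γ₁ : Type*} [Group Γ₁] {Γ₂ : Type*} [Group Γ₂]
    {Λ₁ : Subgroup Γ₁} {Λ₂ : Subgroup Γ₂}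
    (R₁ : RepSystem Λ₁) (R₂ : RepSystem Λ₂) : RepSystem (Λ₁.prod Λ₂) where
  Δ := R₁.Δ ×ˢ R₂.Δ
  one_mem := Finset.mem_product.mpr ⟨R₁.one_mem, R₂.one_mem⟩
  rep := fun p => (R₁.rep p.1, R₂.rep p.2)
  rep_mem := fun p => Finset.mem_product.mpr ⟨R₁.rep_mem p.1, R₂.rep_mem p.2⟩
  rep_spec := fun p => Subgroup.mem_prod.mpr ⟨R₁.rep_spec p.1, R₂.rep_spec p.2⟩
  rep_idem := fun x hx => by
    rcases Finset.mem_product.mp hx with ⟨h1, h2⟩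
    exact Prod.ext_iff.mpr ⟨R₁.rep_idem x.1 h1, R₂.rep_idem x.2 h2⟩
  rep_coset := fun p v hv => by
    rcases Subgroup.mem_prod.mp hv with ⟨h1, h2⟩
    exact Prod.ext_iff.mpr ⟨R₁.rep_coset p.1 v.1 h1, R₂.rep_coset p.2 v.2 h2⟩

/-- The 1-form `𝐯̂(x,s) = ⟨𝐯, α(x,s)⟩` on a product, standard inner product. -/
def vhat2 {Γ₁ : Type*} [Group Γ₁] {Γ₂ : Type*} [Group Γ₂]
    {Λ₁ : Subgroup Γ₁} {Λ₂ : Subgroup Γ₂} {m₁ m₂ : ℕ}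
    (ψ₁ : Λ₁ ≃* Multiplicative (Fin m₁ → ℤ)) (R₁ : RepSystem Λ₁)
    (ψ₂ : Λ₂ ≃* Multiplicative (Fin m₂ → ℤ)) (R₂ : RepSystem Λ₂)
    (v : (Fin m₁ → ℝ) × (Fin m₂ → ℝ)) : (Γ₁ × Γ₂) → (Γ₁ × Γ₂) → ℝ :=
  fun x s => (∑ i, v.1 i * (cocycle ψ₁ R₁ x.1 s.1 i : ℝ)) +
    ∑ i, v.2 i * (cocycle ψ₂ R₂ x.2 s.2 i : ℝ)

/-- The 1-form `𝐯̂(x,s) = ⟨𝐯, α(x,s)⟩` on a product, orthogonal-sum of the two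
bilinear forms `B₁`, `B₂`. -/
def vhatB2 {Γ₁ : Type*} [Group Γ₁] {Γ₂ : Type*} [Group Γ₂]
    {Λ₁ : Subgroup Γ₁} {Λ₂ : Subgroup Γ₂} {m₁ m₂ : ℕ}
    (ψ₁ : Λ₁ ≃* Multiplicative (Fin m₁ → ℤ)) (R₁ : RepSystem Λ₁)
    (B₁ : (Fin m₁ → ℝ) →ₗ[ℝ] (Fin m₁ → ℝ) →ₗ[ℝ] ℝ)
    (ψ₂ : Λ₂ ≃* Multiplicative (Fin m₂ → ℤ)) (R₂ : RepSystem Λ₂)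
    (B₂ : (Fin m₂ → ℝ) →ₗ[ℝ] (Fin m₂ → ℝ) →ₗ[ℝ] ℝ)
    (v : (Fin m₁ → ℝ) × (Fin m₂ → ℝ)) : (Γ₁ × Γ₂) → (Γ₁ × Γ₂) → ℝ :=
  fun x s => B₁ v.1 (fun i => (cocycle ψ₁ R₁ x.1 s.1 i : ℝ)) +
    B₂ v.2 (fun i => (cocycle ψ₂ R₂ x.2 s.2 i : ℝ))

end


/-! With `c(x,s) = μ(s)/#F` and `#Δ = [Γ:Λ]`, the weights `c` form a probability measure on
`Δ × Γ`, so `Q(v)` is the variance `∑ c·(u - χ(u))²` of `u` and is nonnegative. If it vanishes,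
then `u = χ(u)` on `Δ × supp μ`, so the cocycle `v̂ - df` equals `n·χ(u)` on products of `n`
elements of `supp μ`. As `supp μ` generates `Γ` as a semigroup and `df(1, γ) = 0` for `γ ∈ Λ`,
every `⟨v, ψ γ⟩` is a positive multiple of `χ(u)`; `γ = 1` forces `χ(u) = 0`, so `v ⊥ ℤ^m`. -/

section Variance

variable {ι κ : Type*} {w : κ → ℝ}

lemma Summable.mul_of_mul_sq (hw0 : ∀ k, 0 ≤ w k) (hw : Summable w) {g : κ → ℝ}
    (hg : Summable fun k => w k * g k ^ 2) : Summable fun k => w k * g k := by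
  refine Summable.of_norm_bounded (hw.add hg) fun k => ?_
  rw [Real.norm_eq_abs, abs_mul, abs_of_nonneg (hw0 k)]
  have : |g k| ≤ 1 + g k ^ 2 := by nlinarith [abs_nonneg (g k), sq_abs (g k)]
  nlinarith [hw0 k]

lemma tsum_mul_sub_sq (hw0 : ∀ k, 0 ≤ w k) (hw : Summable w) {g : κ → ℝ}
    (hg : Summable fun k => w k * g k ^ 2) (a : ℝ) :
    ∑' k, w k * (g k - a) ^ 2
      = ∑' k, w k * g k ^ 2 - 2 * a * ∑' k, w k * g k + a ^ 2 * ∑' k, w k := by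
  have hwg := (Summable.mul_of_mul_sq hw0 hw hg).mul_left (2 * a)
  rw [← tsum_mul_left, ← tsum_mul_left, ← hg.tsum_sub hwg,
    ← (hg.sub hwg).tsum_add (hw.mul_left _)]
  exact tsum_congr fun k => by ring

lemma Summable.mul_sub_sq (hw0 : ∀ k, 0 ≤ w k) (hw : Summable w) {g : κ → ℝ}
    (hg : Summable fun k => w k * g k ^ 2) (a : ℝ) :
    Summable fun k => w k * (g k - a) ^ 2 :=
  ((hg.sub ((Summable.mul_of_mul_sq hw0 hw hg).mul_left (2 * a))).add
    (hw.mul_left (a ^ 2))).congr fun k => by ring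

/-- The variance of `g` with respect to the probability measure `(i, k) ↦ w k` on `s × κ`. -/
lemma sum_tsum_mul_sq_sub_sq {s : Finset ι} (hs : s.Nonempty) (hw0 : ∀ k, 0 ≤ w k)
    (hw : HasSum w (s.card : ℝ)⁻¹) {g : ι → κ → ℝ}
    (hg : ∀ i ∈ s, Summable fun k => w k * g i k ^ 2) :
    (∑ i ∈ s, ∑' k, w k * g i k ^ 2) - (∑ i ∈ s, ∑' k, w k * g i k) ^ 2
      = ∑ i ∈ s, ∑' k, w k * (g i k - ∑ j ∈ s, ∑' k, w k * g j k) ^ 2 := by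
  set a := ∑ j ∈ s, ∑' k, w k * g j k
  have hcard : (s.card : ℝ) ≠ 0 := by exact_mod_cast hs.card_pos.ne'
  rw [Finset.sum_congr rfl fun i hi => tsum_mul_sub_sq hw0 hw.summable (hg i hi) a,
    hw.tsum_eq, Finset.sum_add_distrib, Finset.sum_sub_distrib, ← Finset.mul_sum,
    Finset.sum_const, nsmul_eq_mul]
  field_simp
  ring

lemma eq_of_sum_tsum_mul_sub_sq_eq_zero {s : Finset ι} (hw0 : ∀ k, 0 ≤ w k)
    {g : ι → κ → ℝ} {a : ℝ} (hg : ∀ i ∈ s, Summable fun k => w k * (g i k - a) ^ 2)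
    (h : ∑ i ∈ s, ∑' k, w k * (g i k - a) ^ 2 = 0) {i : ι} (hi : i ∈ s) {k : κ}
    (hk : 0 < w k) : g i k = a := by
  have hterm : ∀ i k, 0 ≤ w k * (g i k - a) ^ 2 := fun i k => by have := hw0 k; positivity
  have hi0 := (Finset.sum_eq_zero_iff_of_nonneg fun i _ => tsum_nonneg (hterm i)).mp h i hi
  have hk0 := congrFun ((hasSum_zero_iff_of_nonneg (hterm i)).mp (hi0 ▸ (hg i hi).hasSum)) k
  simpa [hk.ne', sub_eq_zero] using hk0

end Variance

namespace RepSystem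

variable {Γ : Type*} [Group Γ] {Λ : Subgroup Γ} (R : RepSystem Λ)

lemma rep_eq_of_mul_inv_mem {a b : Γ} (h : b * a⁻¹ ∈ Λ) : R.rep b = R.rep a := by
  simpa using R.rep_coset a _ h

lemma rep_rep_mul (γ t : Γ) : R.rep (R.rep γ * t) = R.rep (γ * t) :=
  R.rep_eq_of_mul_inv_mem <| by simpa [mul_assoc] using inv_mem (R.rep_spec γ)

lemma rep_eq_one_of_mem {γ : Γ} (h : γ ∈ Λ) : R.rep γ = 1 := by
  rw [R.rep_eq_of_mul_inv_mem (a := 1) (by simpa using h), R.rep_idem 1 R.one_mem]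

def equivRightCosets : R.Δ ≃ Quotient (QuotientGroup.rightRel Λ) where
  toFun x := Quotient.mk _ x.1
  invFun := Quotient.lift (fun γ => ⟨R.rep γ, R.rep_mem γ⟩) fun _ _ h =>
    Subtype.ext (R.rep_eq_of_mul_inv_mem (QuotientGroup.rightRel_apply.mp h)).symm
  left_inv x := Subtype.ext (R.rep_idem x.1 x.2)
  right_inv := Quotient.ind fun γ =>
    Quotient.sound (QuotientGroup.rightRel_apply.mpr (R.rep_spec γ))

lemma card_Δ_eq_index : R.Δ.card = Λ.index := by
  rw [← Nat.card_eq_finsetCard, Nat.card_congr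
    (R.equivRightCosets.trans (QuotientGroup.quotientRightRelEquivQuotientLeftRel Λ))]
  rfl

end RepSystem

section Cocycle

variable {Γ : Type*} [Group Γ] {Λ : Subgroup Γ} (R : RepSystem Λ)
  {m : ℕ} (ψ : Λ ≃* Multiplicative (Fin m → ℤ))

lemma cocycle_mul (x s t : Γ) :
    cocycle ψ R x (s * t) = cocycle ψ R x s + cocycle ψ R (R.rep (x * s)) t := by
  rw [cocycle, cocycle, cocycle, ← toAdd_mul, ← map_mul]
  congr 2
  ext
  simp only [Subgroup.coe_mul, R.rep_rep_mul, mul_assoc, inv_mul_cancel_left]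

lemma cocycle_one_of_mem (γ : Λ) : cocycle ψ R 1 γ = (ψ γ).toAdd := by
  rw [cocycle]
  congr 2
  ext
  simp [R.rep_eq_one_of_mem γ.2]

lemma vhat_mul (v : Fin m → ℝ) (x s t : Γ) :
    vhat ψ R v x (s * t) = vhat ψ R v x s + vhat ψ R v (R.rep (x * s)) t := by
  simp only [vhat, cocycle_mul, Pi.add_apply, Int.cast_add, mul_add, Finset.sum_add_distrib]

lemma dd_mul (f : Γ → ℝ) (x s t : Γ) :
    dd R f x (s * t) = dd R f x s + dd R f (R.rep (x * s)) t := by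
  simp only [dd, R.rep_rep_mul, mul_assoc]
  ring

lemma exists_pos_mul_of_mem_closure {ω : Γ → Γ → ℝ}
    (hω : ∀ x s t, ω x (s * t) = ω x s + ω (R.rep (x * s)) t) {S : Set Γ} {a : ℝ}
    (hS : ∀ x ∈ R.Δ, ∀ s ∈ S, ω x s = a) {γ : Γ} (hγ : γ ∈ Subsemigroup.closure S) :
    ∀ x ∈ R.Δ, ∃ n : ℕ, 0 < n ∧ ω x γ = n * a := by
  induction hγ using Subsemigroup.closure_induction with
  | mem s hs => exact fun x hx => ⟨1, one_pos, by rw [hS x hx s hs, Nat.cast_one, one_mul]⟩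
  | mul s t _ _ ihs iht =>
    intro x hx
    obtain ⟨n₁, hn₁, e₁⟩ := ihs x hx
    obtain ⟨n₂, -, e₂⟩ := iht _ (R.rep_mem _)
    exact ⟨n₁ + n₂, by omega, by rw [hω, e₁, e₂]; push_cast; ring⟩

end Cocycle

theorem covariance_posdef_general
    {Γ : Type*} [Group Γ] {Λ : Subgroup Γ} {m : ℕ} (ψ : Λ ≃* Multiplicative (Fin m → ℤ))
    (R : RepSystem Λ) (μ : Γ → ℝ) (hμ : IsProb μ) (hnd : Nondeg μ) :
    ∀ (v : Fin m → ℝ) (u : Γ → Γ → ℝ) (f : Γ → ℝ),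
      IsHarmDecomp R μ (vhat ψ R v) u f →
      0 ≤ (∑ x ∈ R.Δ, ∑' s : Γ, μ s / (Λ.index : ℝ) * u x s ^ 2) - chi R μ u ^ 2 ∧
      ((∑ x ∈ R.Δ, ∑' s : Γ, μ s / (Λ.index : ℝ) * u x s ^ 2) - chi R μ u ^ 2 = 0 →
        v = 0) := by
  rintro v u f ⟨-, ⟨hsq, -⟩, hdec⟩
  have hΔ : R.Δ.Nonempty := ⟨1, R.one_mem⟩
  have hF : (0 : ℝ) < Λ.index := by rw [← R.card_Δ_eq_index]; exact_mod_cast hΔ.card_pos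
  have hc0 : ∀ s, 0 ≤ μ s / (Λ.index : ℝ) := fun s => div_nonneg (hμ.1 s) hF.le
  have hc : HasSum (fun s => μ s / (Λ.index : ℝ)) (R.Δ.card : ℝ)⁻¹ := by
    simpa [R.card_Δ_eq_index, div_eq_mul_inv] using hμ.2.div_const (Λ.index : ℝ)
  rw [chi, sum_tsum_mul_sq_sub_sq hΔ hc0 hc hsq, ← chi]
  refine ⟨Finset.sum_nonneg fun x _ => tsum_nonneg fun s => by have := hc0 s; positivity,
    fun hQ => ?_⟩
  have hu : ∀ x ∈ R.Δ, ∀ s ∈ {s | 0 < μ s}, vhat ψ R v x s - dd R f x s = chi R μ u := by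
    intro x hx s hs
    rw [hdec x hx s, add_sub_cancel_right]
    exact eq_of_sum_tsum_mul_sub_sq_eq_zero hc0
      (fun x hx => Summable.mul_sub_sq hc0 hc.summable (hsq x hx) _) hQ hx (div_pos hs hF)
  have hΛ (a : Fin m → ℤ) : ∃ n : ℕ, 0 < n ∧ ∑ i, v i * (a i : ℝ) = n * chi R μ u := by
    set γ := ψ.symm (Multiplicative.ofAdd a)
    obtain ⟨n, hn, e⟩ := exists_pos_mul_of_mem_closure R
      (fun x s t => by rw [vhat_mul, dd_mul]; ring) hu (hnd γ) 1 R.one_mem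
    refine ⟨n, hn, ?_⟩
    simpa [vhat, dd, cocycle_one_of_mem, R.rep_eq_one_of_mem γ.2, γ] using e
  have hχ : chi R μ u = 0 := by
    obtain ⟨n, hn, e⟩ := hΛ 0
    simpa [hn.ne'] using e.symm
  funext i
  obtain ⟨n, -, e⟩ := hΛ (Pi.single i 1)
  simpa [hχ, Pi.single_apply] using e

/-- The covariance quadratic form
`Q(v) = ∑_{x,s} c(x,s)·u(x,s)² − χ(u)²` (with `u` the harmonic part of `v̂`) is
positive definite. -/
theorem covariance_posdef
    {Γ : Type*} [Group Γ] [Countable Γ] {Λ : Subgroup Γ} (hN : Λ.Normal)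
    (hI : Λ.index ≠ 0) {m : ℕ} (hm : 1 ≤ m) (ψ : Λ ≃* Multiplicative (Fin m → ℤ))
    (R : RepSystem Λ) (μ : Γ → ℝ) (hμ : IsProb μ) (hnd : Nondeg μ)
    (hmom : FinSecondMoment μ) :
    ∀ (v : Fin m → ℝ) (u : Γ → Γ → ℝ) (f : Γ → ℝ),
      IsHarmDecomp R μ (vhat ψ R v) u f →
      0 ≤ (∑ x ∈ R.Δ, ∑' s : Γ, μ s / (Λ.index : ℝ) * u x s ^ 2) - chi R μ u ^ 2 ∧
      ((∑ x ∈ R.Δ, ∑' s : Γ, μ s / (Λ.index : ℝ) * u x s ^ 2) - chi R μ u ^ 2 = 0 →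
        v = 0) :=
  covariance_posdef_general ψ R μ hμ hnd

end NSVA
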